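/- Fix d ≥ 1. Let Q↑d = {(a₁,…,a_d) ∈ ℚ^d : a₁ < a₂ < … < a_d}, and let J^<_d be the structure with domain Q↑d in the relational language with binary relation symbols <_{ij} and =_{ij} for 1 ≤ i,j ≤ d, interpreted by: ā <_{ij} b̄ iff a_i < b_j, and ā =_{ij} b̄ iff a_i = b_j. Then J^<_d is ultrahomogeneous: every isomorphism between finite substructures of J^<_d extends to an automorphism of J^<_d. -/

import Mathlib

open FirstOrder FirstOrder.Language

/-- The set of strictly increasing d-tuples of rationals. -/
abbrev QUp (d : ℕ) : Type := {v : Fin d → ℚ // StrictMono v}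

/-- The relation symbols of `J^<_d`: for each pair `(i, j)` of coordinates, a binary symbol
`<_{ij}` (encoded by `true`) and a binary symbol `=_{ij}` (encoded by `false`). -/
def JRels (d : ℕ) : ℕ → Type
  | 2 => Fin d × Fin d × Bool
  | _ => Empty

/-- The language of `J^<_d`, with the `2d²` binary relation symbols `<_{ij}` and `=_{ij}`. -/
def JLang (d : ℕ) : FirstOrder.Language := ⟨fun _ => Empty, JRels d⟩

/-- Interpretation of the binary relation symbols:
`u <_{ij} v` iff `u i < v j`, and `u =_{ij} v` iff `u i = v j`. -/
def jBinary {d : ℕ} (r : Fin d × Fin d × Bool) (v : Fin 2 → QUp d) : Prop :=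
  if r.2.2 then (v 0).1 r.1 < (v 1).1 r.2.1 else (v 0).1 r.1 = (v 1).1 r.2.1

/-- The interpretation of the relation symbols on `QUp d`. -/
def jRelInterp (d : ℕ) : ∀ n, JRels d n → (Fin n → QUp d) → Prop
  | 0, r, _ => r.elim
  | 1, r, _ => r.elim
  | 2, r, v => jBinary r v
  | (_ + 3), r, _ => r.elim

/-- The structure `J^<_d` on the strictly increasing d-tuples of rationals. -/
instance (d : ℕ) : (JLang d).Structure (QUp d) where
  funMap := fun f _ => f.elim
  RelMap := fun {n} r v => jRelInterp d n r v

/-!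
A finitely generated substructure `S` of `J^<_d` is finite, as the language is relational, and
an embedding `f : S → J^<_d` preserves the relations `<_{ij}`, i.e. the comparisons between all
coordinates of elements of `S`. So `s i ↦ (f s) i` is a well-defined finite partial isomorphism
of `ℚ`; by back-and-forth it extends to an order automorphism `e` of `ℚ`, and applying `e`
coordinatewise is an automorphism of `J^<_d` extending `f`.
-/

/-- Cantor's back-and-forth argument, started from `p` rather than from the empty partial
isomorphism. -/
theorem Order.PartialIso.exists_orderIso_extend {α β : Type*} [LinearOrder α] [LinearOrder β]
    [Countable α] [DenselyOrdered α] [NoMinOrder α] [NoMaxOrder α] [Nonempty α]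
    [Countable β] [DenselyOrdered β] [NoMinOrder β] [NoMaxOrder β] [Nonempty β]
    (p : Order.PartialIso α β) :
    ∃ e : α ≃o β, ∀ q ∈ p.val, e q.1 = q.2 := by
  classical
  cases nonempty_encodable α
  cases nonempty_encodable β
  let toCofinal : α ⊕ β → Order.Cofinal (Order.PartialIso α β) := fun x ↦
    Sum.recOn x (definedAtLeft β) (definedAtRight α)
  let I : Order.Ideal (Order.PartialIso α β) := Order.idealOfCofinals p toCofinal
  let F a := funOfIdeal a I (Order.cofinal_meets_idealOfCofinals _ toCofinal (Sum.inl a))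
  let G b := invOfIdeal b I (Order.cofinal_meets_idealOfCofinals _ toCofinal (Sum.inr b))
  refine ⟨OrderIso.ofCmpEqCmp (fun a ↦ (F a).val) (fun b ↦ (G b).val) fun a b ↦ ?_, ?_⟩
  · obtain ⟨f, hf, ha⟩ := (F a).prop
    obtain ⟨g, hg, hb⟩ := (G b).prop
    obtain ⟨m, -, fm, gm⟩ := I.directed _ hf _ hg
    exact m.prop (a, _) (fm ha) (_, b) (gm hb)
  · rintro ⟨a, b⟩ hab
    obtain ⟨f, hf, ha⟩ := (F a).prop
    obtain ⟨m, -, fm, pm⟩ := I.directed _ hf _ (Order.mem_idealOfCofinals p toCofinal)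
    have h := m.prop (a, (F a).val) (fm ha) (a, b) (pm hab)
    rw [cmp_self_eq_eq] at h
    exact (cmp_eq_eq_iff _ _).mp h.symm

namespace QUp

variable {d : ℕ}

instance : (JLang d).IsRelational := fun _ => inferInstanceAs (IsEmpty Empty)

def ltSymb (i j : Fin d) : (JLang d).Relations 2 := show JRels d 2 from (i, j, true)

lemma relMap_ltSymb (i j : Fin d) (u v : QUp d) :
    Structure.RelMap (ltSymb i j) ![u, v] ↔ u.1 i < v.1 j :=
  Iff.rfl

section Embedding

variable {M : Type*} [(JLang d).Structure M]

lemma coord_lt_coord_iff_relMap (f : M ↪[JLang d] QUp d) (x y : M) (i j : Fin d) :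
    (f x).1 i < (f y).1 j ↔ Structure.RelMap (ltSymb i j) ![x, y] := by
  rw [← f.map_rel, ← FinVec.map_eq]
  exact (relMap_ltSymb i j _ _).symm

lemma coord_lt_coord_iff_of_embedding (f g : M ↪[JLang d] QUp d) (x y : M) (i j : Fin d) :
    (f x).1 i < (f y).1 j ↔ (g x).1 i < (g y).1 j :=
  (coord_lt_coord_iff_relMap f x y i j).trans (coord_lt_coord_iff_relMap g x y i j).symm

lemma cmp_coord_eq_of_embedding (f g : M ↪[JLang d] QUp d) (x y : M) (i j : Fin d) :
    cmp ((f x).1 i) ((f y).1 j) = cmp ((g x).1 i) ((g y).1 j) := by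
  simp only [cmp, cmpUsing, coord_lt_coord_iff_of_embedding f g]

lemma exists_orderIso_coord_eq [Finite M] (f g : M ↪[JLang d] QUp d) :
    ∃ e : ℚ ≃o ℚ, ∀ x i, e ((g x).1 i) = (f x).1 i := by
  classical
  let graph : Set (ℚ × ℚ) := Set.range fun x : M × Fin d => ((g x.1).1 x.2, (f x.1).1 x.2)
  have hgraph : graph.Finite := Set.finite_range _
  obtain ⟨e, he⟩ := Order.PartialIso.exists_orderIso_extend ⟨hgraph.toFinset, by
    simp only [hgraph.mem_toFinset, graph, Set.forall_mem_range]
    exact fun x y => cmp_coord_eq_of_embedding g f _ _ _ _⟩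
  exact ⟨e, fun x i => he _ (hgraph.mem_toFinset.2 ⟨(x, i), rfl⟩)⟩

end Embedding

def mapOrderIso (e : ℚ ≃o ℚ) : QUp d ≃[JLang d] QUp d where
  toFun u := ⟨e ∘ u.1, e.strictMono.comp u.2⟩
  invFun u := ⟨e.symm ∘ u.1, e.symm.strictMono.comp u.2⟩
  left_inv u := Subtype.ext (funext fun i => e.symm_apply_apply _)
  right_inv u := Subtype.ext (funext fun i => e.apply_symm_apply _)
  map_fun' f := isEmptyElim f
  map_rel' {n} r v := match n, r with
    | 2, (i, j, b) => by cases b <;> simp [Structure.RelMap, jRelInterp, jBinary]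
    | 0, r | 1, r | _ + 3, r => Empty.elim r

end QUp

theorem JLang_ultrahomogeneous_general (d : ℕ) :
    (JLang d).IsUltrahomogeneous (QUp d) := by
  intro S hS f
  have : Finite S := hS.finite
  obtain ⟨e, he⟩ := QUp.exists_orderIso_coord_eq f S.subtype
  refine ⟨QUp.mapOrderIso e, ?_⟩
  ext s i
  exact (he s i).symm

/-- `J^<_d` is ultrahomogeneous: every isomorphism between finite (= finitely generated)
substructures of `J^<_d` extends to an automorphism of `J^<_d`. -/
theorem JLang_ultrahomogeneous (d : ℕ) (hd : 1 ≤ d) :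
    (JLang d).IsUltrahomogeneous (QUp d) :=
  JLang_ultrahomogeneous_general d
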